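/- arXiv:2310.15407 — 5 statements merged into one kernel-verified Lean document; each statement's English description precedes it below -/
import Mathlib

section
/- Let τ > 0, 0 < κ < 1 with κ > (i-1)/i for a positive integer i, and ϑ(0) > 0. Then the i-th derivative of ϑ(t) = ((ϑ(0))^{1-κ} - τ(1-κ)t)^{1/(1-κ)} on [0, T₀) equals (-τ)^i · ∏_{j=1}^{i-1}(jκ - j + 1) · ((ϑ(0))^{1-κ} - τ(1-κ)t)^{1/(1-κ) - i}, and this expression remains bounded as t → T₀⁻ (the exponent 1/(1-κ) - i is nonnegative). -/
open Real Set Finset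

/-!
Differentiating `(c - a s) ^ p` once multiplies it by `-a (p - j)` and lowers the exponent by
one. For `p = 1 / (1 - κ)` and `a = τ (1 - κ)` the factor `1 - κ` clears the denominator of
`p - j = (1 - j (1 - κ)) / (1 - κ)`. The condition `κ > (i - 1) / i` says exactly `i < p`, so
the final exponent `p - i` is nonnegative, and as the base decreases from `ϑ(0)^(1-κ)` towards
`0` the `i`-th derivative stays bounded by its size at `t = 0`.
-/

lemma iteratedDeriv_rpow_const_sub_mul (a c p : ℝ) (n : ℕ) {t : ℝ} (ht : 0 < c - a * t) :
    iteratedDeriv n (fun s => (c - a * s) ^ p) t =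
      (-a) ^ n * (∏ j ∈ range n, (p - j)) * (c - a * t) ^ (p - n) := by
  induction n generalizing t with
  | zero => simp
  | succ n ih =>
    have hopen : IsOpen {s : ℝ | 0 < c - a * s} := isOpen_lt continuous_const (by fun_prop)
    have hev : iteratedDeriv n (fun s => (c - a * s) ^ p) =ᶠ[nhds t]
        fun s => (-a) ^ n * (∏ j ∈ range n, (p - j)) * (c - a * s) ^ (p - n) := by
      filter_upwards [hopen.mem_nhds ht] with s hs using ih hs
    have hlin : HasDerivAt (fun s : ℝ => c - a * s) (-a) t := by
      simpa using ((hasDerivAt_id t).const_mul a).const_sub c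
    rw [iteratedDeriv_succ, hev.deriv_eq,
      ((hlin.rpow_const (p := p - n) (Or.inl ht.ne')).const_mul _).deriv, prod_range_succ]
    push_cast
    ring_nf

lemma prod_range_eq_prod_Icc_of_apply_zero {M : Type*} [CommMonoid M] (f : ℕ → M)
    (hf : f 0 = 1) (n : ℕ) : ∏ j ∈ range n, f j = ∏ j ∈ Icc 1 (n - 1), f j := by
  cases n with
  | zero => simp
  | succ n => rw [range_eq_Ico, prod_eq_prod_Ico_succ_bot n.succ_pos, hf, one_mul]; rfl

lemma one_sub_pow_mul_prod_range_inv_one_sub_sub {κ : ℝ} (hκ : κ ≠ 1) (n : ℕ) :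
    (1 - κ) ^ n * ∏ j ∈ range n, (1 / (1 - κ) - j) = ∏ j ∈ Icc 1 (n - 1), ((j : ℝ) * κ - j + 1) := by
  have h1κ : 1 - κ ≠ 0 := sub_ne_zero.mpr hκ.symm
  rw [← prod_range_eq_prod_Icc_of_apply_zero _ (by simp), ← card_range n, ← prod_const,
    card_range, ← prod_mul_distrib]
  refine prod_congr rfl fun j _ => ?_
  field_simp
  ring

lemma natCast_lt_inv_one_sub {κ : ℝ} {i : ℕ} (hκ : κ < 1) (hκi : ((i : ℝ) - 1) / i < κ) :
    (i : ℝ) < 1 / (1 - κ) := by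
  rw [lt_div_iff₀ (sub_pos.mpr hκ)]
  rcases i.eq_zero_or_pos with rfl | hi
  · norm_num
  · have hi' : (0 : ℝ) < i := by exact_mod_cast hi
    rw [div_lt_iff₀ hi'] at hκi
    linarith

theorem stmt_2_general (τ κ ϑ0 T0 : ℝ) (i : ℕ) (ϑ : ℝ → ℝ)
    (hτ : 0 < τ) (hκ1 : κ < 1)
    (hκi : ((i : ℝ) - 1) / i < κ)
    (hT0 : T0 = ϑ0 ^ (1 - κ) / (τ * (1 - κ)))
    (hϑ : ∀ t : ℝ, ϑ t = (ϑ0 ^ (1 - κ) - τ * (1 - κ) * t) ^ (1 / (1 - κ))) :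
    (∀ t ∈ Set.Ico (0 : ℝ) T0,
      iteratedDeriv i ϑ t =
        (-τ) ^ i * (∏ j ∈ Finset.Icc 1 (i - 1), ((j : ℝ) * κ - j + 1)) *
          (ϑ0 ^ (1 - κ) - τ * (1 - κ) * t) ^ (1 / (1 - κ) - i)) ∧
    (0 ≤ 1 / (1 - κ) - (i : ℝ)) ∧
    (∃ M : ℝ, ∀ t ∈ Set.Ico (0 : ℝ) T0, |iteratedDeriv i ϑ t| ≤ M) := by
  have ha : 0 < τ * (1 - κ) := mul_pos hτ (sub_pos.mpr hκ1)
  have hbase : ∀ t ∈ Ico 0 T0, 0 < ϑ0 ^ (1 - κ) - τ * (1 - κ) * t := fun t ht => by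
    have := (lt_div_iff₀' ha).mp (hT0 ▸ ht.2)
    linarith
  have hderiv : ∀ t ∈ Ico 0 T0, iteratedDeriv i ϑ t =
      (-τ) ^ i * (∏ j ∈ Icc 1 (i - 1), ((j : ℝ) * κ - j + 1)) *
        (ϑ0 ^ (1 - κ) - τ * (1 - κ) * t) ^ (1 / (1 - κ) - i) := fun t ht => by
    rw [funext hϑ, iteratedDeriv_rpow_const_sub_mul _ _ _ _ (hbase t ht),
      ← one_sub_pow_mul_prod_range_inv_one_sub_sub hκ1.ne, ← neg_mul, mul_pow]
    ring
  have hexp : 0 ≤ 1 / (1 - κ) - (i : ℝ) := sub_nonneg.mpr (natCast_lt_inv_one_sub hκ1 hκi).le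
  refine ⟨hderiv, hexp, |(-τ) ^ i * ∏ j ∈ Icc 1 (i - 1), ((j : ℝ) * κ - j + 1)| *
    (ϑ0 ^ (1 - κ)) ^ (1 / (1 - κ) - i), fun t ht => ?_⟩
  rw [hderiv t ht, abs_mul, abs_of_nonneg (rpow_nonneg (hbase t ht).le _)]
  gcongr
  · exact (hbase t ht).le
  · nlinarith [ht.1]

theorem stmt_2 (τ κ ϑ0 T0 : ℝ) (i : ℕ) (ϑ : ℝ → ℝ)
    (hτ : 0 < τ) (hκ0 : 0 < κ) (hκ1 : κ < 1) (hϑ0 : 0 < ϑ0)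
    (hi : 0 < i) (hκi : ((i : ℝ) - 1) / i < κ)
    (hT0 : T0 = ϑ0 ^ (1 - κ) / (τ * (1 - κ)))
    (hϑ : ∀ t : ℝ, ϑ t = (ϑ0 ^ (1 - κ) - τ * (1 - κ) * t) ^ (1 / (1 - κ))) :
    (∀ t ∈ Set.Ico (0 : ℝ) T0,
      iteratedDeriv i ϑ t =
        (-τ) ^ i * (∏ j ∈ Finset.Icc 1 (i - 1), ((j : ℝ) * κ - j + 1)) *
          (ϑ0 ^ (1 - κ) - τ * (1 - κ) * t) ^ (1 / (1 - κ) - i)) ∧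
    (0 ≤ 1 / (1 - κ) - (i : ℝ)) ∧
    (∃ M : ℝ, ∀ t ∈ Set.Ico (0 : ℝ) T0, |iteratedDeriv i ϑ t| ≤ M) :=
  stmt_2_general τ κ ϑ0 T0 i ϑ hτ hκ1 hκi hT0 hϑ
end

section
/- For real z₂ and α₁ with |α₁| < k_{c2}, |z₂ + α₁| < k_{c2}, and k_{c2} > 0, the integral ∫₀^{z₂} σ k_{c2}²/(k_{c2}² − (σ + α₁)²) dσ is well-defined, nonnegative, and equals zero if and only if z₂ = 0. -/
/-!
For σ between 0 and z₂ the point σ + α₁ lies between α₁ and z₂ + α₁, hence in (-kc, kc), so the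
barrier weight kc² / (kc² - (σ + α₁)²) is continuous and positive there. The integrand therefore
has the sign of σ, and the integral from 0 to z₂ is positive unless z₂ = 0.
-/

open Set MeasureTheory

theorem intervalIntegral_id_mul_pos {g : ℝ → ℝ} {b : ℝ}
    (hi : IntervalIntegrable (fun x => x * g x) volume 0 b) (hg : ∀ x ∈ uIcc 0 b, 0 < g x)
    (hb : b ≠ 0) : 0 < ∫ x in 0..b, x * g x := by
  rcases hb.lt_or_gt with hb | hb
  · have hneg : ∀ x ∈ Ioo b 0, 0 < -(x * g x) := fun x hx =>
      neg_pos.2 (mul_neg_of_neg_of_pos hx.2 (hg x (Ioo_subset_Icc_self hx |> Icc_subset_uIcc')))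
    have := intervalIntegral.intervalIntegral_pos_of_pos_on (f := fun x => -(x * g x))
      hi.symm.neg hneg hb
    rwa [intervalIntegral.integral_neg, ← intervalIntegral.integral_symm] at this
  · exact intervalIntegral.intervalIntegral_pos_of_pos_on hi
      (fun x hx => mul_pos hx.1 (hg x (Ioo_subset_Icc_self hx |> Icc_subset_uIcc))) hb

theorem sq_add_lt_sq_of_mem_uIcc {k z α σ : ℝ} (hα : |α| < k) (hz : |z + α| < k)
    (hσ : σ ∈ uIcc 0 z) : (σ + α) ^ 2 < k ^ 2 := by
  have hmem : σ + α ∈ uIcc (0 + α) (z + α) := by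
    rw [← image_add_const_uIcc]
    exact mem_image_of_mem _ hσ
  rw [zero_add] at hmem
  obtain ⟨hlo, hhi⟩ := ordConnected_Ioo.uIcc_subset (abs_lt.1 hα) (abs_lt.1 hz) hmem
  exact sq_lt_sq' hlo hhi

theorem stmt_10_general (kc z₂ α₁ : ℝ)
    (hα : |α₁| < kc) (hx : |z₂ + α₁| < kc) :
    IntervalIntegrable (fun σ => σ * kc ^ 2 / (kc ^ 2 - (σ + α₁) ^ 2)) MeasureTheory.volume 0 z₂ ∧
    0 ≤ ∫ σ in (0 : ℝ)..z₂, σ * kc ^ 2 / (kc ^ 2 - (σ + α₁) ^ 2) ∧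
    ((∫ σ in (0 : ℝ)..z₂, σ * kc ^ 2 / (kc ^ 2 - (σ + α₁) ^ 2)) = 0 ↔ z₂ = 0) := by
  simp_rw [mul_div_assoc]
  have hkc : 0 < kc := (abs_nonneg α₁).trans_lt hα
  have hden : ∀ σ ∈ uIcc 0 z₂, 0 < kc ^ 2 - (σ + α₁) ^ 2 := fun σ hσ =>
    sub_pos.2 (sq_add_lt_sq_of_mem_uIcc hα hx hσ)
  have hweight : ∀ σ ∈ uIcc 0 z₂, 0 < kc ^ 2 / (kc ^ 2 - (σ + α₁) ^ 2) := fun σ hσ =>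
    div_pos (by positivity) (hden σ hσ)
  have hint : IntervalIntegrable (fun σ => σ * (kc ^ 2 / (kc ^ 2 - (σ + α₁) ^ 2))) volume 0 z₂ :=
    (continuousOn_id.mul (continuousOn_const.div (by fun_prop)
      fun σ hσ => (hden σ hσ).ne')).intervalIntegrable
  have hpos : z₂ ≠ 0 → _ := intervalIntegral_id_mul_pos hint hweight
  refine ⟨hint, ?_, ⟨fun h => by_contra fun hz => (hpos hz).ne' h, by rintro rfl; simp⟩⟩
  rcases eq_or_ne z₂ 0 with rfl | hz
  · simp
  · exact (hpos hz).le

theorem stmt_10 (kc z₂ α₁ : ℝ) (hkc : 0 < kc)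
    (hα : |α₁| < kc) (hx : |z₂ + α₁| < kc) :
    IntervalIntegrable (fun σ => σ * kc ^ 2 / (kc ^ 2 - (σ + α₁) ^ 2)) MeasureTheory.volume 0 z₂ ∧
    0 ≤ ∫ σ in (0 : ℝ)..z₂, σ * kc ^ 2 / (kc ^ 2 - (σ + α₁) ^ 2) ∧
    ((∫ σ in (0 : ℝ)..z₂, σ * kc ^ 2 / (kc ^ 2 - (σ + α₁) ^ 2)) = 0 ↔ z₂ = 0) :=
  stmt_10_general kc z₂ α₁ hα hx
end

section
/- For k_c > 0, α ∈ ℝ with |α| < k_c, and z ∈ ℝ with |z + α| < k_c, the iBLF satisfies the upper bound ∫₀^{z} σ k_c²/(k_c² − (σ + α)²) dσ ≤ k_c² z²/(k_c² − (z + α)²). -/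
/-!
The integrand `g σ = σ k² / (k² - (σ + α)²)` is increasing on the constraint interval
`|σ + α| < k` (the numerator of `g'` is `k² (k² - α² + σ²) > 0`). For a monotone integrand the
integral from `0` to `z` is at most `z · g z` in either orientation, and `z · g z` is exactly the
right-hand side.
-/

open Set intervalIntegral

theorem MonotoneOn.intervalIntegral_le_mul {f : ℝ → ℝ} {a b : ℝ} (hf : MonotoneOn f (uIcc a b)) :
    ∫ x in a..b, f x ≤ (b - a) * f b := by
  have hb : b ∈ uIcc a b := right_mem_uIcc
  rcases le_total a b with hab | hba
  · calc ∫ x in a..b, f x ≤ ∫ _ in a..b, f b :=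
          integral_mono_on hab hf.intervalIntegrable intervalIntegrable_const
            fun x hx => hf (uIcc_of_le hab ▸ hx) hb hx.2
      _ = (b - a) * f b := by rw [integral_const, smul_eq_mul]
  · have hlower : (a - b) * f b ≤ ∫ x in b..a, f x :=
      calc (a - b) * f b = ∫ _ in b..a, f b := by rw [integral_const, smul_eq_mul]
        _ ≤ ∫ x in b..a, f x :=
          integral_mono_on hba intervalIntegrable_const hf.intervalIntegrable.symm
            fun x hx => hf hb (uIcc_of_ge hba ▸ hx) hx.1
    rw [integral_symm]
    linarith

theorem monotoneOn_iBLF_integrand {k α : ℝ} (hα : |α| < k) :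
    MonotoneOn (fun σ => σ * k ^ 2 / (k ^ 2 - (σ + α) ^ 2)) (Ioo (-k - α) (k - α)) := by
  rintro σ ⟨hσ₁, hσ₂⟩ τ ⟨hτ₁, hτ₂⟩ hστ
  have hDσ : 0 < k ^ 2 - (σ + α) ^ 2 := by nlinarith
  have hDτ : 0 < k ^ 2 - (τ + α) ^ 2 := by nlinarith
  obtain ⟨hα₁, hα₂⟩ := abs_lt.mp hα
  have hk : 0 < k := by linarith
  -- with `s = σ + α`, `t = τ + α`:
  -- `2k (k² - α² + στ) = (k + α)(k - s)(k - t) + (k - α)(k + s)(k + t)`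
  have hfactor : 0 ≤ k ^ 2 - α ^ 2 + σ * τ := by
    nlinarith [mul_pos (mul_pos (sub_pos.2 hα₁) (sub_pos.2 hσ₂)) (sub_pos.2 hτ₂),
      mul_pos (mul_pos (sub_pos.2 hα₂) (sub_pos.2 hσ₁)) (sub_pos.2 hτ₁)]
  -- cross-multiplied, the claim is `k² (τ - σ) (k² - α² + στ) ≥ 0`
  dsimp only
  rw [div_le_div_iff₀ hDσ hDτ]
  nlinarith [mul_nonneg (sq_nonneg k) (mul_nonneg (sub_nonneg.mpr hστ) hfactor)]

theorem stmt_13_general (kc α z : ℝ)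
    (hα : |α| < kc) (hx : |z + α| < kc) :
    (∫ σ in (0 : ℝ)..z, σ * kc ^ 2 / (kc ^ 2 - (σ + α) ^ 2)) ≤
      kc ^ 2 * z ^ 2 / (kc ^ 2 - (z + α) ^ 2) := by
  have mem_Ioo {σ : ℝ} (h : |σ + α| < kc) : σ ∈ Ioo (-kc - α) (kc - α) := by
    obtain ⟨h₁, h₂⟩ := abs_lt.mp h
    constructor <;> linarith
  have hsub : uIcc 0 z ⊆ Ioo (-kc - α) (kc - α) :=
    ordConnected_Ioo.uIcc_subset (mem_Ioo (by simpa using hα)) (mem_Ioo hx)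
  calc _ ≤ (z - 0) * (z * kc ^ 2 / (kc ^ 2 - (z + α) ^ 2)) :=
        ((monotoneOn_iBLF_integrand hα).mono hsub).intervalIntegral_le_mul
    _ = _ := by ring

theorem stmt_13 (kc α z : ℝ) (hkc : 0 < kc)
    (hα : |α| < kc) (hx : |z + α| < kc) :
    (∫ σ in (0 : ℝ)..z, σ * kc ^ 2 / (kc ^ 2 - (σ + α) ^ 2)) ≤
      kc ^ 2 * z ^ 2 / (kc ^ 2 - (z + α) ^ 2) :=
  stmt_13_general kc α z hα hx
end

section
/- The function N(ζ) = e^{ζ²}·cos((π/2)ζ) is an even function satisfying lim sup_{s→∞} (1/s)∫₀ˢ N(ζ)dζ = +∞ and lim inf_{s→∞} (1/s)∫₀ˢ N(ζ)dζ = −∞ (i.e., it is a Nussbaum-type function). -/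
/-!
On `[2k - 1, 2k + 1]` the factor `cos (π ζ / 2)` has the sign `(-1)^k`, and on the middle half
of that interval the integrand has absolute value at least `exp ((2k - 1/2)²) / 2`. Since
`exp ((b + 1/2)²) = exp (b²) exp (b + 1/4)`, this single hump outweighs the whole preceding
integral over `[0, 2k - 1]`, which is at most `(2k - 1) exp ((2k - 1)²)` in absolute value, by
far more than the length `2k + 1`. Hence `(-1)^k` times the mean of `N` over `[0, 2k + 1]`
tends to `+∞`; even and odd `k` give the two limits.
-/

open Real Filter

noncomputable def nussbaum (ζ : ℝ) : ℝ := exp (ζ ^ 2) * cos (π / 2 * ζ)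

noncomputable def nussbaumMean (s : ℝ) : ℝ := 1 / s * ∫ ζ in (0 : ℝ)..s, nussbaum ζ

theorem nussbaum_neg (ζ : ℝ) : nussbaum (-ζ) = nussbaum ζ := by
  simp only [nussbaum, neg_sq, mul_neg, cos_neg]

theorem continuous_nussbaum : Continuous nussbaum := by
  unfold nussbaum; fun_prop

theorem abs_integral_nussbaum_le {b : ℝ} (hb : 0 ≤ b) :
    |∫ ζ in (0 : ℝ)..b, nussbaum ζ| ≤ b * exp (b ^ 2) := by
  have h := intervalIntegral.norm_integral_le_of_norm_le_const (a := 0) (b := b)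
    (C := exp (b ^ 2)) (f := nussbaum) fun x hx => by
      rw [Set.uIoc_of_le hb] at hx
      rw [nussbaum, norm_mul, norm_of_nonneg (exp_nonneg _)]
      calc exp (x ^ 2) * ‖cos (π / 2 * x)‖ ≤ exp (x ^ 2) * 1 := by
            gcongr; exact abs_cos_le_one _
        _ ≤ exp (b ^ 2) := by
            rw [mul_one, exp_le_exp]; exact pow_le_pow_left₀ hx.1.le hx.2 2
  simpa [abs_of_nonneg hb, mul_comm] using h

theorem cos_pi_div_two_mul_nonneg {t : ℝ} (ht : |t| ≤ 1) : 0 ≤ cos (π / 2 * t) := by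
  rw [abs_le] at ht
  apply cos_nonneg_of_neg_pi_div_two_le_of_le <;> nlinarith [pi_pos]

theorem half_le_cos_pi_div_two_mul {t : ℝ} (ht : |t| ≤ 1 / 2) : 1 / 2 ≤ cos (π / 2 * t) := by
  have ht2 : t ^ 2 ≤ 1 / 4 := by
    rw [← sq_abs]; nlinarith [abs_nonneg t]
  have hpi2 : π ^ 2 ≤ 16 := by nlinarith [pi_pos, pi_le_four]
  have : (π / 2 * t) ^ 2 ≤ 1 := by
    rw [mul_pow]; nlinarith [sq_nonneg t]
  linarith [one_sub_sq_div_two_le_cos (x := π / 2 * t)]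

theorem half_exp_sq_le_integral_exp_sq_mul_cos {c : ℝ} (hc : 1 / 2 ≤ c) :
    1 / 2 * exp ((c - 1 / 2) ^ 2) ≤
      ∫ ζ in (c - 1)..(c + 1), exp (ζ ^ 2) * cos (π / 2 * (ζ - c)) := by
  have hint : IntervalIntegrable (fun ζ => exp (ζ ^ 2) * cos (π / 2 * (ζ - c)))
      MeasureTheory.volume (c - 1) (c + 1) :=
    (by fun_prop : Continuous _).intervalIntegrable _ _
  calc 1 / 2 * exp ((c - 1 / 2) ^ 2)
      = ∫ _ in (c - 1 / 2)..(c + 1 / 2), 1 / 2 * exp ((c - 1 / 2) ^ 2) := by norm_num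
    _ ≤ ∫ ζ in (c - 1 / 2)..(c + 1 / 2), exp (ζ ^ 2) * cos (π / 2 * (ζ - c)) := by
        refine intervalIntegral.integral_mono_on (by linarith) intervalIntegrable_const
          (hint.mono_set ?_) fun x hx => ?_
        · rw [Set.uIcc_of_le (by linarith), Set.uIcc_of_le (by linarith)]
          exact Set.Icc_subset_Icc (by linarith) (by linarith)
        have hcos := half_le_cos_pi_div_two_mul (t := x - c)
          (abs_le.2 ⟨by linarith [hx.1], by linarith [hx.2]⟩)
        have hexp : exp ((c - 1 / 2) ^ 2) ≤ exp (x ^ 2) :=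
          exp_le_exp.2 (pow_le_pow_left₀ (by linarith) hx.1 2)
        nlinarith [exp_pos ((c - 1 / 2) ^ 2)]
    _ ≤ ∫ ζ in (c - 1)..(c + 1), exp (ζ ^ 2) * cos (π / 2 * (ζ - c)) := by
        refine intervalIntegral.integral_mono_interval (by linarith) (by linarith) (by linarith)
          ?_ hint
        refine (MeasureTheory.ae_restrict_iff' measurableSet_Ioc).2 (.of_forall fun x hx => ?_)
        exact mul_nonneg (exp_nonneg _)
          (cos_pi_div_two_mul_nonneg (abs_le.2 ⟨by linarith [hx.1], by linarith [hx.2]⟩))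

theorem neg_one_pow_mul_nussbaum (k : ℕ) (ζ : ℝ) :
    (-1) ^ k * nussbaum ζ = exp (ζ ^ 2) * cos (π / 2 * (ζ - 2 * k)) := by
  rw [nussbaum, mul_left_comm, ← cos_sub_nat_mul_pi]
  ring_nf

theorem sub_le_neg_one_pow_mul_integral_nussbaum {k : ℕ} (hk : 1 ≤ k) :
    1 / 2 * exp ((2 * k - 1 / 2) ^ 2) - (2 * k - 1) * exp ((2 * k - 1) ^ 2) ≤
      (-1) ^ k * ∫ ζ in (0 : ℝ)..(2 * k + 1), nussbaum ζ := by
  have hk' : (1 : ℝ) ≤ k := by exact_mod_cast hk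
  have hsplit := intervalIntegral.integral_add_adjacent_intervals
    (continuous_nussbaum.intervalIntegrable (μ := MeasureTheory.volume) 0 (2 * k - 1))
    (continuous_nussbaum.intervalIntegrable (2 * k - 1) (2 * k + 1))
  have hhead := abs_integral_nussbaum_le (b := 2 * k - 1) (by linarith)
  have hhump := half_exp_sq_le_integral_exp_sq_mul_cos (c := 2 * k) (by linarith)
  simp_rw [← neg_one_pow_mul_nussbaum, intervalIntegral.integral_const_mul] at hhump
  rw [← hsplit, mul_add]
  have hsign : |(-1 : ℝ) ^ k| = 1 := by simp
  have := neg_abs_le ((-1 : ℝ) ^ k * ∫ ζ in (0 : ℝ)..(2 * k - 1), nussbaum ζ)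
  rw [abs_mul, hsign, one_mul] at this
  linarith

theorem quadratic_le_half_exp_sq_sub_mul_exp_sq (b : ℝ) (hb : 0 ≤ b) :
    (b - 4) / 4 * (b + 2) ≤ 1 / 2 * exp ((b + 1 / 2) ^ 2) - b * exp (b ^ 2) := by
  have hsplit : exp ((b + 1 / 2) ^ 2) = exp (b ^ 2) * exp (b + 1 / 4) := by
    rw [← exp_add]; ring_nf
  have hquad := quadratic_le_exp_of_nonneg (x := b + 1 / 4) (by linarith)
  have hone : 1 ≤ exp (b ^ 2) := one_le_exp (sq_nonneg b)
  have hX : (b - 4) / 4 * (b + 2) ≤ 1 / 2 * exp (b + 1 / 4) - b := by nlinarith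
  have hX0 : 0 ≤ 1 / 2 * exp (b + 1 / 4) - b := by nlinarith
  rw [hsplit]
  nlinarith

theorem tendsto_neg_one_pow_mul_nussbaumMean :
    Tendsto (fun k : ℕ => (-1) ^ k * nussbaumMean (2 * k + 1)) atTop atTop := by
  have hlin : Tendsto (fun k : ℕ => (2 * k - 5 : ℝ) / 4) atTop atTop := by
    refine Tendsto.atTop_div_const (by norm_num) ?_
    simpa [sub_eq_add_neg] using tendsto_atTop_add_const_right _ (-5)
      (tendsto_natCast_atTop_atTop.const_mul_atTop (two_pos : (0 : ℝ) < 2))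
  refine tendsto_atTop_mono' _ ((eventually_ge_atTop 1).mono fun k hk => ?_) hlin
  have hk' : (1 : ℝ) ≤ k := by exact_mod_cast hk
  have hs : (0 : ℝ) < 2 * k + 1 := by linarith
  have hgrowth := quadratic_le_half_exp_sq_sub_mul_exp_sq (2 * k - 1) (by linarith)
  rw [show (2 * k - 1 : ℝ) + 1 / 2 = 2 * k - 1 / 2 by ring] at hgrowth
  simp only [nussbaumMean]
  rw [mul_left_comm, one_div_mul_eq_div, le_div_iff₀ hs]
  linarith [sub_le_neg_one_pow_mul_integral_nussbaum hk]

theorem stmt_16 :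
    (∀ ζ : ℝ, Real.exp ((-ζ) ^ 2) * Real.cos ((π / 2) * (-ζ)) =
      Real.exp (ζ ^ 2) * Real.cos ((π / 2) * ζ)) ∧
    (∀ M : ℝ,
      (∃ᶠ s in atTop, M <
        (1 / s) * ∫ ζ in (0 : ℝ)..s, Real.exp (ζ ^ 2) * Real.cos ((π / 2) * ζ)) ∧
      (∃ᶠ s in atTop,
        (1 / s) * (∫ ζ in (0 : ℝ)..s, Real.exp (ζ ^ 2) * Real.cos ((π / 2) * ζ)) < -M)) := by
  have hmean := tendsto_neg_one_pow_mul_nussbaumMean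
  have hs : Tendsto (fun k : ℕ => (2 * k + 1 : ℝ)) atTop atTop :=
    tendsto_atTop_add_const_right _ 1 (tendsto_natCast_atTop_atTop.const_mul_atTop two_pos)
  have heven : Tendsto (fun m : ℕ => 2 * m) atTop atTop := tendsto_id.const_mul_atTop' two_pos
  have hodd : Tendsto (fun m : ℕ => 2 * m + 1) atTop atTop :=
    (tendsto_add_atTop_nat 1).comp heven
  refine ⟨nussbaum_neg, fun M => ⟨?_, ?_⟩⟩
  · refine (hs.comp heven).frequently
      (((hmean.comp heven).eventually_gt_atTop M).mono fun m hm => ?_).frequently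
    simpa [nussbaumMean, nussbaum, pow_mul] using hm
  · refine (hs.comp hodd).frequently
      (((hmean.comp hodd).eventually_gt_atTop M).mono fun m hm => ?_).frequently
    simpa [nussbaumMean, nussbaum, pow_succ, pow_mul, lt_neg] using hm
end

section
/- Suppose |x_i(0)| < k_{ci} for all i, V: [0,∞) → [0,∞) is continuous with V(t) ≤ V(0)e^{−Ct} + D/C for all t ≥ 0 (C > 0, D ≥ 0), and for each i the iBLF term V_{zi}(t) = ∫₀^{z_i(t)} σk_{ci}²/(k_{ci}² − (σ + α_{i−1}(t))²)dσ satisfies V_{zi}(t) ≤ V(t) whenever |x_i(t)| < k_{ci}. If additionally V_{zi}(z_i, α) → ∞ as |z_i + α| → k_{ci} (with |α| < k_{ci} fixed), and x_i is continuous, then |x_i(t)| < k_{ci} for all t ≥ 0. -/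
/-!
Write `x = z + α`. For `t ≥ 0` we have `V t ≤ B := V 0 + D / C`, so the barrier integral is at
most `B` while `|x| < k_c`. On `[0, T]` we have `|α| ≤ a < k_c`, and uniformly in such `α` the
barrier integral exceeds `B` once `|z + α|` is within some `ε` of `k_c`: on `[0, z]` the integrand
is at least `(k_c / 2) σ / (k_c - α - σ)`, whose integral grows like
`(k_c - α) log (1 / (k_c - α - z))`. So on `[0, T]` the continuous function `|x|` takes no value
in `(k_c - ε, k_c)`, and by the intermediate value theorem it cannot reach `k_c`.
-/

open Real Set

/-- The integral barrier Lyapunov function `V_z(z, α)`, with `k` the constraint bound `k_c`. -/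
noncomputable def iBLF (k α w : ℝ) : ℝ :=
  ∫ σ in (0 : ℝ)..w, σ * k ^ 2 / (k ^ 2 - (σ + α) ^ 2)

lemma iBLF_neg (k α w : ℝ) : iBLF k (-α) (-w) = iBLF k α w := by
  set f : ℝ → ℝ := fun σ => σ * k ^ 2 / (k ^ 2 - (σ + α) ^ 2)
  calc iBLF k (-α) (-w) = -∫ σ in (0 : ℝ)..-w, f (-σ) := by
        rw [iBLF, ← intervalIntegral.integral_neg]
        congr 1
        ext σ
        simp only [f]
        ring_nf
    _ = iBLF k α w := by
        rw [intervalIntegral.integral_comp_neg, neg_neg, neg_zero, intervalIntegral.integral_symm,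
          neg_neg, iBLF]

lemma log_bound_le_iBLF {k α w : ℝ} (hα : -k < α) (hw : 0 ≤ w) (hwα : w + α < k) :
    k / 2 * ((k - α) * log ((k - α) / (k - α - w)) - w) ≤ iBLF k α w := by
  set c := k - α
  have hcσ : ∀ σ ∈ uIcc 0 w, 0 < c - σ := fun σ hσ => by
    rw [uIcc_of_le hw] at hσ
    linarith [hσ.2]
  have hden : ∀ σ ∈ uIcc 0 w, 0 < k ^ 2 - (σ + α) ^ 2 := fun σ hσ => by
    rw [uIcc_of_le hw] at hσ
    nlinarith [hσ.1, hσ.2]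
  have hinv : ContinuousOn (fun σ => (c - σ)⁻¹) (uIcc 0 w) :=
    (continuousOn_const.sub continuousOn_id).inv₀ fun σ hσ => (hcσ σ hσ).ne'
  have hlog : ∫ σ in (0 : ℝ)..w, (c - σ)⁻¹ = log (c / (c - w)) := by
    rw [intervalIntegral.integral_comp_sub_left (fun σ => σ⁻¹), sub_zero, integral_inv]
    rw [uIcc_of_le (by linarith)]
    exact fun h => by linarith [h.1]
  have hint : ∫ σ in (0 : ℝ)..w, k / 2 * (c * (c - σ)⁻¹ - 1) =
      k / 2 * (c * log (c / (c - w)) - w) := by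
    rw [intervalIntegral.integral_const_mul, intervalIntegral.integral_sub
      (intervalIntegrable_const.mul_continuousOn hinv) intervalIntegrable_const,
      intervalIntegral.integral_const_mul, hlog]
    simp
  rw [← hint]
  refine intervalIntegral.integral_mono_on hw
    (ContinuousOn.intervalIntegrable
      (continuousOn_const.mul ((continuousOn_const.mul hinv).sub continuousOn_const)))
    (ContinuousOn.intervalIntegrable (ContinuousOn.div (by fun_prop) (by fun_prop)
      fun σ hσ => (hden σ hσ).ne')) fun σ hσ => ?_
  have hσ' : σ ∈ uIcc 0 w := (uIcc_of_le hw).symm ▸ hσ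
  have hcσ' := hcσ σ hσ'
  calc k / 2 * (c * (c - σ)⁻¹ - 1) = σ * k ^ 2 / (2 * k * (c - σ)) := by
        field_simp
        ring
    _ ≤ σ * k ^ 2 / (k ^ 2 - (σ + α) ^ 2) := by
        refine div_le_div_of_nonneg_left (by nlinarith [hσ.1]) (hden σ hσ') ?_
        nlinarith [hσ.1]

lemma exists_add_le_sub_of_iBLF_le {k a : ℝ} (ha : 0 ≤ a) (hak : a < k) (B : ℝ) :
    ∃ ε > 0, ∀ α w, |α| ≤ a → w + α < k → iBLF k α w ≤ B → w + α ≤ k - ε := by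
  have hk : 0 < k := ha.trans_lt hak
  set m := k - a
  have hm0 : 0 < m := by linarith
  -- `T` is tuned so that `k / 2 * (m * T - 2 * k) = |B| + k / 2`, the lower bound reached below.
  set T := (2 * |B| / k + 2 * k + 1) / m with hT
  have hT0 : 0 < T := by positivity
  have hεm : m * exp (-T) < m := mul_lt_of_lt_one_right hm0 (exp_lt_one_iff.2 (by linarith))
  refine ⟨m * exp (-T), by positivity, fun α w hαa hwα hB => ?_⟩
  by_contra! hclose
  obtain ⟨hαl, hαu⟩ := abs_le.1 hαa
  have hw : 0 ≤ w := by linarith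
  have hlog : T ≤ log ((k - α) / (k - α - w)) := by
    rw [le_log_iff_exp_le (div_pos (by linarith) (by linarith)), le_div_iff₀ (by linarith)]
    calc exp T * (k - α - w) ≤ exp T * (m * exp (-T)) := by gcongr; linarith
      _ = m := by rw [mul_left_comm, ← exp_add, add_neg_cancel, exp_zero, mul_one]
      _ ≤ k - α := by linarith
  have hgrowth : m * T ≤ (k - α) * log ((k - α) / (k - α - w)) :=
    mul_le_mul (by linarith) hlog hT0.le (by linarith)
  have : |B| + k / 2 ≤ iBLF k α w :=
    calc |B| + k / 2 = k / 2 * (m * T - 2 * k) := by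
          rw [hT]
          field_simp
          ring
      _ ≤ k / 2 * ((k - α) * log ((k - α) / (k - α - w)) - w) := by gcongr; linarith
      _ ≤ iBLF k α w := log_bound_le_iBLF (by linarith) hw hwα
  linarith [le_abs_self B]

lemma exists_abs_le_sub_of_iBLF_le {k a : ℝ} (ha : 0 ≤ a) (hak : a < k) (B : ℝ) :
    ∃ ε > 0, ∀ α w, |α| ≤ a → |w + α| < k → iBLF k α w ≤ B → |w + α| ≤ k - ε := by
  obtain ⟨ε, hε, h⟩ := exists_add_le_sub_of_iBLF_le ha hak B
  refine ⟨ε, hε, fun α w hαa hwα hB => abs_le.2 ⟨?_, h α w hαa (abs_lt.1 hwα).2 hB⟩⟩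
  have := h (-α) (-w) (by rwa [abs_neg]) (by linarith [(abs_lt.1 hwα).1]) (by rwa [iBLF_neg])
  linarith

theorem stmt_19_general (kc C D : ℝ) (V : ℝ → ℝ) (z α : ℝ → ℝ)
    (hC : 0 < C)
    (hzc : Continuous z) (hαc : Continuous α)
    (hα : ∀ t : ℝ, |α t| < kc)
    (hx0 : |z 0 + α 0| < kc)
    (hVnn : ∀ t : ℝ, 0 ≤ V t)
    (hVb : ∀ t : ℝ, 0 ≤ t → V t ≤ V 0 * Real.exp (-C * t) + D / C)
    (hiBLF : ∀ t : ℝ, 0 ≤ t → |z t + α t| < kc →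
      (∫ σ in (0 : ℝ)..z t, σ * kc ^ 2 / (kc ^ 2 - (σ + α t) ^ 2)) ≤ V t) :
    ∀ t : ℝ, 0 ≤ t → |z t + α t| < kc := by
  intro T hT
  by_contra! hexit
  have hVB : ∀ t, 0 ≤ t → V t ≤ V 0 + D / C := fun t ht => by
    have : V 0 * exp (-C * t) ≤ V 0 :=
      mul_le_of_le_one_right (hVnn 0) (exp_le_one_iff.2 (by nlinarith))
    linarith [hVb t ht]
  obtain ⟨t₁, -, hαmax⟩ :=
    isCompact_Icc.exists_isMaxOn (nonempty_Icc.2 hT) hαc.abs.continuousOn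
  obtain ⟨ε, hε, hgap⟩ := exists_abs_le_sub_of_iBLF_le (abs_nonneg _) (hα t₁) (V 0 + D / C)
  have hsafe : ∀ t ∈ Icc 0 T, |z t + α t| < kc → |z t + α t| ≤ kc - ε := fun t ht hx =>
    hgap _ _ (hαmax ht) hx ((hiBLF t ht.1 hx).trans (hVB t ht.1))
  obtain ⟨s, hs, hxs⟩ : kc - ε / 2 ∈ (fun t => |z t + α t|) '' Icc 0 T :=
    intermediate_value_Icc hT (by fun_prop : Continuous fun t => |z t + α t|).continuousOn
      ⟨(hsafe 0 ⟨le_rfl, hT⟩ hx0).trans (by linarith), by linarith⟩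
  linarith [hsafe s hs (by linarith)]

theorem stmt_19 (kc C D : ℝ) (V : ℝ → ℝ) (z α : ℝ → ℝ)
    (hkc : 0 < kc) (hC : 0 < C) (hD : 0 ≤ D)
    (hzc : Continuous z) (hαc : Continuous α)
    (hα : ∀ t : ℝ, |α t| < kc)
    (hx0 : |z 0 + α 0| < kc)
    (hVc : Continuous V) (hVnn : ∀ t : ℝ, 0 ≤ V t)
    (hVb : ∀ t : ℝ, 0 ≤ t → V t ≤ V 0 * Real.exp (-C * t) + D / C)
    (hiBLF : ∀ t : ℝ, 0 ≤ t → |z t + α t| < kc →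
      (∫ σ in (0 : ℝ)..z t, σ * kc ^ 2 / (kc ^ 2 - (σ + α t) ^ 2)) ≤ V t)
    (hblow : ∀ α' : ℝ, |α'| < kc → ∀ M : ℝ, ∃ δ > 0, ∀ w : ℝ,
      |w + α'| < kc → kc - |w + α'| < δ →
        M ≤ ∫ σ in (0 : ℝ)..w, σ * kc ^ 2 / (kc ^ 2 - (σ + α') ^ 2)) :
    ∀ t : ℝ, 0 ≤ t → |z t + α t| < kc :=
  stmt_19_general kc C D V z α hC hzc hαc hα hx0 hVnn hVb hiBLF
end
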